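/- arXiv:1608.07170 — 4 statements merged into one kernel-verified Lean document; each statement's English description precedes it below -/
import Mathlib

section
/- Let K ⊆ ℝⁿ be a pointed closed convex cone and x ∈ K. Then x can be written as a sum of at most ℓ_F(x) − 1 elements each belonging to an extreme ray of K, where ℓ_F(x) is the length of the longest chain of nonempty faces of the minimal face of K containing x. -/
/-!
Induction on the dimension of the cone `M`. If `x` lies in a proper exposed face `M ∩ ker g`,
pass to that face: it is again a pointed closed convex cone, of smaller dimension, and the minimal
face of `x` does not change. Otherwise pick an extreme ray `R` of `M` (found by the same descent
through exposed faces) and `r ≠ 0` in it, and subtract from `x` the largest multiple `t • r`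
keeping `y = x - t • r` in `M`. A supporting hyperplane at `y` exposes a proper face containing
`y` but not `x`, so the minimal face of `y` is a proper face of that of `x`; its chains are
therefore shorter by one, and `x = t • r + y` with `t • r ∈ R`.
-/

/-- The dimension of a set: the linear dimension of its affine hull. -/
noncomputable def setDim {E : Type*} [AddCommGroup E] [Module ℝ E] (S : Set E) : ℕ :=
  Module.finrank ℝ (vectorSpan ℝ S)

/-- `F` is a face of the convex set `S`: a convex subset such that whenever a point of the
open segment between `x, y ∈ S` lies in `F`, both endpoints lie in `F`. -/
def IsFaceOf {E : Type*} [AddCommGroup E] [Module ℝ E] (S F : Set E) : Prop :=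
  F ⊆ S ∧ Convex ℝ F ∧ ∀ ⦃x⦄, x ∈ S → ∀ ⦃y⦄, y ∈ S → ∀ ⦃a : ℝ⦄, 0 < a → a < 1 →
    a • x + (1 - a) • y ∈ F → x ∈ F ∧ y ∈ F

/-- An extreme ray of `K` is a one-dimensional face. -/
def IsExtremeRay {E : Type*} [AddCommGroup E] [Module ℝ E] (K R : Set E) : Prop :=
  IsFaceOf K R ∧ setDim R = 1

/-- `x` is a sum of at most `k` elements, each belonging to an extreme ray of `K`. -/
def IsSumOfExtremeRayElems {E : Type*} [AddCommGroup E] [Module ℝ E]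
    (K : Set E) (k : ℕ) (x : E) : Prop :=
  ∃ m : ℕ, m ≤ k ∧ ∃ f : Fin m → E,
    (∀ i, ∃ R : Set E, IsExtremeRay K R ∧ f i ∈ R) ∧ x = ∑ i, f i

/-- There is a chain of `l` nonempty faces of `S`, each properly containing the next. -/
def HasFaceChainOfLength {E : Type*} [AddCommGroup E] [Module ℝ E] (S : Set E) (l : ℕ) : Prop :=
  ∃ c : Fin l → Set E, StrictAnti c ∧ ∀ i, IsFaceOf S (c i) ∧ (c i).Nonempty

/-- `l` is the length of the longest chain of nonempty faces of `S`. -/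
def IsLongestFaceChainLength {E : Type*} [AddCommGroup E] [Module ℝ E] (S : Set E) (l : ℕ) : Prop :=
  HasFaceChainOfLength S l ∧ ∀ m, HasFaceChainOfLength S m → m ≤ l

/-- The minimal face of `K` containing `x`: the intersection of all faces of `K`
containing `x`. -/
def minFace {E : Type*} [AddCommGroup E] [Module ℝ E] (K : Set E) (x : E) : Set E :=
  ⋂₀ {F : Set E | IsFaceOf K F ∧ x ∈ F}

open Topology

section Faces

variable {E : Type*} [AddCommGroup E] [Module ℝ E] {K F G : Set E} {x y : E}

theorem isFaceOf_self (hK : Convex ℝ K) : IsFaceOf K K :=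
  ⟨subset_rfl, hK, fun _ hx _ hy _ _ _ _ => ⟨hx, hy⟩⟩

theorem IsFaceOf.trans (hF : IsFaceOf K F) (hG : IsFaceOf F G) : IsFaceOf K G :=
  ⟨hG.1.trans hF.1, hG.2.1, fun _ hx _ hy _ ha ha1 hmem =>
    have hxy := hF.2.2 hx hy ha ha1 (hG.1 hmem)
    hG.2.2 hxy.1 hxy.2 ha ha1 hmem⟩

theorem IsFaceOf.isFaceOf_of_subset (hG : IsFaceOf K G) (hF : IsFaceOf K F) (hGF : G ⊆ F) :
    IsFaceOf F G :=
  ⟨hGF, hG.2.1, fun _ hx _ hy _ ha ha1 hmem => hG.2.2 (hF.1 hx) (hF.1 hy) ha ha1 hmem⟩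

/-- `M ∩ ker g` is then a proper exposed face of `M`. -/
def IsProperSupport (M : Set E) (g : E →ₗ[ℝ] ℝ) : Prop :=
  (∀ m ∈ M, 0 ≤ g m) ∧ ∃ m ∈ M, 0 < g m

theorem isFaceOf_inter_ker (hK : Convex ℝ K) {g : E →ₗ[ℝ] ℝ} (hg : ∀ m ∈ K, 0 ≤ g m) :
    IsFaceOf K (K ∩ {w | g w = 0}) := by
  refine ⟨Set.inter_subset_left, hK.inter (convex_hyperplane g.isLinear 0), ?_⟩
  intro u hu v hv a ha ha1 hmem
  have hsum : a * g u + (1 - a) * g v = 0 := by simpa using hmem.2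
  have hu0 : g u = 0 := by nlinarith [hg u hu, hg v hv]
  have hv0 : g v = 0 := by nlinarith [hg u hu, hg v hv]
  exact ⟨⟨hu, hu0⟩, hv, hv0⟩

theorem IsFaceOf.smul_mem (hF : IsFaceOf K F) (hcone : ∀ c : ℝ, 0 ≤ c → ∀ y ∈ K, c • y ∈ K)
    (hy : y ∈ F) {c : ℝ} (hc : 0 ≤ c) : c • y ∈ F := by
  have hyK := hF.1 hy
  have hsplit : y = (c + 2)⁻¹ • (c • y) + (1 - (c + 2)⁻¹) • ((2 / (c + 1)) • y) := by
    rw [smul_smul, smul_smul, ← add_smul]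
    convert (one_smul ℝ y).symm using 2
    field_simp
    ring
  refine (hF.2.2 (hcone c hc y hyK) (hcone _ (by positivity) y hyK) (by positivity) ?_
    (hsplit ▸ hy)).1
  exact inv_lt_one_of_one_lt₀ (by linarith)

theorem IsFaceOf.mem_of_add_mem (hF : IsFaceOf K F) (hcone : ∀ c : ℝ, 0 ≤ c → ∀ y ∈ K, c • y ∈ K)
    (hx : x ∈ K) (hy : y ∈ K) (hxy : x + y ∈ F) : x ∈ F ∧ y ∈ F := by
  have hsplit : x + y = (1 / 2 : ℝ) • ((2 : ℝ) • x) + (1 - 1 / 2 : ℝ) • ((2 : ℝ) • y) := by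
    module
  have h2 := hF.2.2 (hcone 2 zero_le_two x hx) (hcone 2 zero_le_two y hy) one_half_pos
    (by norm_num) (hsplit ▸ hxy)
  constructor
  · simpa [smul_smul] using hF.smul_mem hcone h2.1 one_half_pos.le
  · simpa [smul_smul] using hF.smul_mem hcone h2.2 one_half_pos.le

theorem mem_minFace_self : x ∈ minFace K x := fun _ hF => hF.2

theorem minFace_subset (hF : IsFaceOf K F) (hxF : x ∈ F) : minFace K x ⊆ F :=
  Set.sInter_subset_of_mem ⟨hF, hxF⟩

theorem isFaceOf_minFace (hK : Convex ℝ K) (hx : x ∈ K) : IsFaceOf K (minFace K x) := by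
  refine ⟨minFace_subset (isFaceOf_self hK) hx, convex_sInter fun F hF => hF.1.2.1, ?_⟩
  intro u hu v hv a ha ha1 hmem
  simp only [minFace, Set.mem_sInter] at hmem ⊢
  exact ⟨fun F hF => (hF.1.2.2 hu hv ha ha1 (hmem F hF)).1,
    fun F hF => (hF.1.2.2 hu hv ha ha1 (hmem F hF)).2⟩

theorem IsFaceOf.minFace_eq (hK : Convex ℝ K) (hF : IsFaceOf K F) (hx : x ∈ F) :
    minFace F x = minFace K x := by
  refine subset_antisymm ?_ (Set.sInter_subset_sInter fun G hG => ⟨hF.trans hG.1, hG.2⟩)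
  exact minFace_subset (((isFaceOf_minFace hK (hF.1 hx))).isFaceOf_of_subset hF
    (minFace_subset hF hx)) mem_minFace_self

theorem hasFaceChainOfLength_one (hK : Convex ℝ K) (hne : K.Nonempty) :
    HasFaceChainOfLength K 1 :=
  ⟨fun _ => K, Subsingleton.strictAnti _, fun _ => ⟨isFaceOf_self hK, hne⟩⟩

theorem HasFaceChainOfLength.cons {m : ℕ} (h : HasFaceChainOfLength F m) (hF : IsFaceOf K F)
    (hFK : F ≠ K) (hK : Convex ℝ K) (hne : K.Nonempty) : HasFaceChainOfLength K (m + 1) := by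
  obtain ⟨c, hc, hface⟩ := h
  refine ⟨Matrix.vecCons K c, ?_, Fin.cases ⟨isFaceOf_self hK, hne⟩ fun i =>
    ⟨hF.trans (hface i).1, (hface i).2⟩⟩
  cases m with
  | zero => exact fun i j hij => (hij.ne (Subsingleton.elim (α := Fin 1) i j)).elim
  | succ m => exact hc.vecCons (((hface 0).1.1).trans_ssubset (hF.1.ssubset_of_ne hFK))

theorem hasFaceChainOfLength_minFace_succ (hK : Convex ℝ K) (hx : x ∈ K) (hy : y ∈ minFace K x)
    (hne : minFace K y ≠ minFace K x) {m : ℕ} (h : HasFaceChainOfLength (minFace K y) m) :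
    HasFaceChainOfLength (minFace K x) (m + 1) :=
  have hKx := isFaceOf_minFace hK hx
  h.cons ((isFaceOf_minFace hK (hKx.1 hy)).isFaceOf_of_subset hKx (minFace_subset hKx hy)) hne
    hKx.2.1 ⟨x, mem_minFace_self⟩

theorem IsSumOfExtremeRayElems.of_isFaceOf {k : ℕ} (hF : IsFaceOf K F)
    (h : IsSumOfExtremeRayElems F k x) : IsSumOfExtremeRayElems K k x := by
  obtain ⟨m, hm, f, hf, rfl⟩ := h
  refine ⟨m, hm, f, fun i => ?_, rfl⟩
  obtain ⟨R, hR, hfi⟩ := hf i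
  exact ⟨R, ⟨hF.trans hR.1, hR.2⟩, hfi⟩

theorem IsSumOfExtremeRayElems.add {k : ℕ} (h : IsSumOfExtremeRayElems K k x) {R : Set E}
    (hR : IsExtremeRay K R) (hy : y ∈ R) : IsSumOfExtremeRayElems K (k + 1) (y + x) := by
  obtain ⟨m, hm, f, hf, rfl⟩ := h
  refine ⟨m + 1, by omega, Fin.cons y f, Fin.cases ⟨R, hR, hy⟩ hf, ?_⟩
  rw [Fin.sum_cons]

end Faces

section Dimension

variable {E : Type*} [AddCommGroup E] [Module ℝ E] {S : Set E}

theorem setDim_eq_finrank_span (h0 : (0 : E) ∈ S) :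
    setDim S = Module.finrank ℝ (Submodule.span ℝ S) := by
  have hspan : vectorSpan ℝ S = Submodule.span ℝ S := by
    simpa using vectorSpan_eq_span_vsub_set_right ℝ h0
  rw [setDim, hspan]

theorem exists_mem_ne_zero_of_setDim_pos (h : 0 < setDim S) : ∃ r ∈ S, r ≠ 0 := by
  by_contra! hS
  have hbot : vectorSpan ℝ S = ⊥ :=
    le_bot_iff.1 ((vectorSpan_mono ℝ fun r hr => hS r hr).trans (vectorSpan_singleton ℝ 0).le)
  rw [setDim, hbot, finrank_bot] at h
  exact h.false

theorem setDim_eq_one_of_subset_span_singleton (h0 : (0 : E) ∈ S) {u : E} (hu : u ∈ S)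
    (hu0 : u ≠ 0) (hS : S ⊆ Submodule.span ℝ {u}) : setDim S = 1 := by
  rw [setDim_eq_finrank_span h0, le_antisymm (Submodule.span_le.2 hS)
    (Submodule.span_singleton_le_iff_mem _ _ |>.2 (Submodule.subset_span hu))]
  exact finrank_span_singleton hu0

theorem setDim_inter_ker_lt [FiniteDimensional ℝ E] (h0 : (0 : E) ∈ S) {g : E →ₗ[ℝ] ℝ}
    (hg : IsProperSupport S g) : setDim (S ∩ {w | g w = 0}) < setDim S := by
  obtain ⟨m, hm, hgm⟩ := hg.2
  rw [setDim_eq_finrank_span h0, setDim_eq_finrank_span (S := S ∩ _) ⟨h0, map_zero g⟩]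
  refine Submodule.finrank_lt_finrank_of_lt
    ((Submodule.span_mono Set.inter_subset_left).lt_of_ne fun heq => ?_)
  have hker : Submodule.span ℝ (S ∩ {w | g w = 0}) ≤ LinearMap.ker g :=
    Submodule.span_le.2 fun w hw => hw.2
  exact hgm.ne' (hker (heq ▸ Submodule.subset_span hm))

end Dimension

theorem notMem_interior_of_sub_smul_notMem {V : Type*} [AddCommGroup V] [TopologicalSpace V]
    [IsTopologicalAddGroup V] [Module ℝ V] [ContinuousSMul ℝ V] {S : Set V} {z v : V}
    (h : ∀ ε : ℝ, 0 < ε → z - ε • v ∉ S) : z ∉ interior S := by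
  intro hz
  have hlim : Filter.Tendsto (fun ε : ℝ => z - ε • v) (𝓝[>] 0) (𝓝 z) := by
    have := tendsto_const_nhds (x := z) |>.sub
      ((Filter.tendsto_id (x := 𝓝 (0 : ℝ))).smul_const v)
    simpa using this.mono_left nhdsWithin_le_nhds
  obtain ⟨ε, hεS, hε⟩ :=
    ((hlim.eventually (mem_interior_iff_mem_nhds.1 hz)).and self_mem_nhdsWithin).exists
  exact h ε hε hεS

section Cone

variable {E : Type*} [NormedAddCommGroup E] [NormedSpace ℝ E] {M : Set E} {x r : E}

/-- The proof works inside `span M`, where `M` has nonempty interior, and extends the separating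
functional found there to `E`. -/
theorem exists_isProperSupport_of_sub_smul_notMem [FiniteDimensional ℝ E] (hconv : Convex ℝ M)
    (hcone : ∀ c : ℝ, 0 ≤ c → ∀ y ∈ M, c • y ∈ M) {z v : E} (hz : z ∈ M) (hv : v ∈ M)
    (hsep : ∀ ε : ℝ, 0 < ε → z - ε • v ∉ M) :
    ∃ g : E →ₗ[ℝ] ℝ, IsProperSupport M g ∧ g z = 0 := by
  set V := Submodule.span ℝ M
  have hMV : M ⊆ V := Submodule.subset_span
  set N : Set V := (↑) ⁻¹' M
  have hN : Convex ℝ N := hconv.linear_preimage V.subtype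
  have hspan : Submodule.span ℝ N = ⊤ := Submodule.span_span_coe_preimage
  have h0N : (0 : V) ∈ N := by
    show ((0 : V) : E) ∈ M
    simpa using hcone 0 le_rfl z hz
  have hint : (interior N).Nonempty := by
    rw [hN.interior_nonempty_iff_affineSpan_eq_top,
      AffineSubspace.affineSpan_eq_top_iff_vectorSpan_eq_top_of_nonempty ℝ V V ⟨0, h0N⟩]
    simpa [vectorSpan_eq_span_vsub_set_right ℝ h0N] using hspan
  set zV : V := ⟨z, hMV hz⟩
  have hzint : zV ∉ interior N :=
    notMem_interior_of_sub_smul_notMem (v := ⟨v, hMV hv⟩) fun ε hε => hsep ε hε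
  obtain ⟨f, hf0, hf⟩ := geometric_hahn_banach_of_nonempty_interior_point hN hzint hint
  have hfz : f zV = 0 := by
    have h2 := hf ((2 : ℝ) • zV) (hcone 2 zero_le_two z hz)
    have h0 := hf 0 h0N
    simp only [map_smul, smul_eq_mul, map_zero] at h2 h0
    linarith
  obtain ⟨a, haN, hfa⟩ : ∃ a ∈ N, f a ≠ 0 := by
    by_contra! h
    exact hf0 (ContinuousLinearMap.coe_injective (LinearMap.ext_on hspan h))
  obtain ⟨g, hg⟩ := LinearMap.exists_extend (f : V →ₗ[ℝ] ℝ)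
  have hgM : ∀ m (hm : m ∈ M), g m = f ⟨m, hMV hm⟩ := fun m hm =>
    LinearMap.congr_fun hg ⟨m, hMV hm⟩
  refine ⟨-g, ⟨fun m hm => ?_, a, haN, ?_⟩, ?_⟩
  · simpa [hgM m hm, hfz] using hf ⟨m, hMV hm⟩ hm
  · simpa [hgM a haN, hfz] using (hf a haN).lt_of_ne (by rwa [hfz])
  · rw [LinearMap.neg_apply, hgM z hz, neg_eq_zero]
    exact hfz

structure IsPointedClosedConvexCone (M : Set E) : Prop where
  convex : Convex ℝ M
  isClosed : IsClosed M
  smul_mem : ∀ c : ℝ, 0 ≤ c → ∀ y ∈ M, c • y ∈ M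
  eq_zero_of_neg_mem : ∀ a ∈ M, -a ∈ M → a = 0

namespace IsPointedClosedConvexCone

variable (hM : IsPointedClosedConvexCone M)
include hM

theorem zero_mem (hx : x ∈ M) : (0 : E) ∈ M := by
  simpa using hM.smul_mem 0 le_rfl x hx

/-- If `x - t • r ∈ M` for arbitrarily large `t`, then `t⁻¹ • x - r ∈ M` tends to `-r ∈ M`. -/
theorem bddAbove_sub_smul_mem (hr : r ∈ M) (hr0 : r ≠ 0) :
    BddAbove {t : ℝ | 0 ≤ t ∧ x - t • r ∈ M} := by
  by_contra hunb
  rw [not_bddAbove_iff] at hunb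
  have hfreq : ∃ᶠ t : ℝ in Filter.atTop, t⁻¹ • x - r ∈ M := by
    refine Filter.frequently_atTop'.2 fun a => ?_
    obtain ⟨t, ⟨ht0, htM⟩, hat⟩ := hunb (max a 0)
    have htpos : 0 < t := (le_max_right a 0).trans_lt hat
    refine ⟨t, (le_max_left a 0).trans_lt hat, ?_⟩
    have := hM.smul_mem t⁻¹ (inv_nonneg.2 ht0) _ htM
    rwa [smul_sub, smul_smul, inv_mul_cancel₀ htpos.ne', one_smul] at this
  have hlim : Filter.Tendsto (fun t : ℝ => t⁻¹ • x - r) Filter.atTop (𝓝 (-r)) := by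
    simpa using ((tendsto_inv_atTop_zero (𝕜 := ℝ)).smul_const x).sub_const r
  exact hr0 (hM.eq_zero_of_neg_mem r hr (hM.isClosed.mem_of_frequently_of_tendsto hfreq hlim))

variable [FiniteDimensional ℝ E]

theorem inter_ker (g : E →ₗ[ℝ] ℝ) : IsPointedClosedConvexCone (M ∩ {w | g w = 0}) where
  convex := hM.convex.inter (convex_hyperplane g.isLinear 0)
  isClosed := hM.isClosed.inter (isClosed_eq g.continuous_of_finiteDimensional continuous_const)
  smul_mem c hc y hy := ⟨hM.smul_mem c hc y hy.1, by simp [hy.2.out]⟩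
  eq_zero_of_neg_mem a ha hna := hM.eq_zero_of_neg_mem a ha.1 hna.1

/-- `x - t • r` is where the ray from `x` in direction `-r` leaves `M`. -/
theorem exists_sub_smul_mem_ker (hx : x ∈ M) (hr : r ∈ M) (hr0 : r ≠ 0) :
    ∃ t : ℝ, 0 ≤ t ∧ x - t • r ∈ M ∧
      ∃ g : E →ₗ[ℝ] ℝ, IsProperSupport M g ∧ g (x - t • r) = 0 := by
  set T := {t : ℝ | 0 ≤ t ∧ x - t • r ∈ M}
  have hTclosed : IsClosed T :=
    (isClosed_le continuous_const continuous_id).inter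
      (hM.isClosed.preimage (continuous_const.sub (continuous_id.smul continuous_const)))
  have hbdd := hM.bddAbove_sub_smul_mem (x := x) hr hr0
  have htT : sSup T ∈ T := hTclosed.csSup_mem ⟨0, le_rfl, by simpa using hx⟩ hbdd
  refine ⟨sSup T, htT.1, htT.2, exists_isProperSupport_of_sub_smul_notMem hM.convex hM.smul_mem
    htT.2 hr fun ε hε hmem => ?_⟩
  have hεT : sSup T + ε ∈ T := ⟨by linarith [htT.1], by rwa [add_smul, ← sub_sub]⟩
  linarith [le_csSup hbdd hεT]

theorem exists_isExtremeRay {u : E} (hu : u ∈ M) (hu0 : u ≠ 0) : ∃ R, IsExtremeRay M R := by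
  induction h : setDim M using Nat.strong_induction_on generalizing M u with
  | _ d IH =>
  by_cases hray : M ⊆ Submodule.span ℝ {u}
  · exact ⟨M, isFaceOf_self hM.convex,
      setDim_eq_one_of_subset_span_singleton (hM.zero_mem hu) hu hu0 hray⟩
  obtain ⟨v, hv, hvu⟩ := Set.not_subset.1 hray
  obtain ⟨t, -, hzM, g, hg, hgz⟩ := hM.exists_sub_smul_mem_ker hv hu hu0
  have hz0 : v - t • u ≠ 0 := fun hz =>
    hvu (sub_eq_zero.1 hz ▸ Submodule.smul_mem _ t (Submodule.mem_span_singleton_self u))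
  obtain ⟨R, hR⟩ := IH _ (h ▸ setDim_inter_ker_lt (hM.zero_mem hu) hg) (hM.inter_ker g)
    ⟨hzM, hgz⟩ hz0 rfl
  exact ⟨R, (isFaceOf_inter_ker hM.convex hg.1).trans hR.1, hR.2⟩

theorem isSumOfExtremeRayElems (hx : x ∈ M) {l : ℕ}
    (hl : ∀ m, HasFaceChainOfLength (minFace M x) m → m ≤ l) :
    IsSumOfExtremeRayElems M (l - 1) x := by
  induction h : setDim M using Nat.strong_induction_on generalizing M x l with
  | _ d IH =>
  obtain rfl | hx0 := eq_or_ne x 0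
  · exact ⟨0, Nat.zero_le _, Fin.elim0, fun i => i.elim0, by simp⟩
  by_cases hexp : ∃ g, IsProperSupport M g ∧ g x = 0
  · obtain ⟨g, hg, hgx⟩ := hexp
    have hF := isFaceOf_inter_ker hM.convex hg.1
    refine (IH _ (h ▸ setDim_inter_ker_lt (hM.zero_mem hx) hg) (hM.inter_ker g) ⟨hx, hgx⟩
      ?_ rfl).of_isFaceOf hF
    rwa [hF.minFace_eq hM.convex ⟨hx, hgx⟩]
  obtain ⟨R, hR⟩ := hM.exists_isExtremeRay hx hx0
  obtain ⟨r, hr, hr0⟩ := exists_mem_ne_zero_of_setDim_pos (hR.2 ▸ one_pos : 0 < setDim R)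
  have hrM := hR.1.1 hr
  obtain ⟨t, ht, hyM, g, hg, hgy⟩ := hM.exists_sub_smul_mem_ker hx hrM hr0
  set y := x - t • r
  have hF := isFaceOf_inter_ker hM.convex hg.1
  have hy : y ∈ minFace M x :=
    ((isFaceOf_minFace hM.convex hx).mem_of_add_mem hM.smul_mem (hM.smul_mem t ht r hrM) hyM
      (by simpa [y] using mem_minFace_self)).2
  have hne : minFace M y ≠ minFace M x := fun heq =>
    hexp ⟨g, hg, (minFace_subset hF ⟨hyM, hgy⟩ (heq ▸ mem_minFace_self)).2⟩
  have hly m (hm : HasFaceChainOfLength (minFace M y) m) : m + 1 ≤ l :=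
    hl _ (hasFaceChainOfLength_minFace_succ hM.convex hx hy hne hm)
  have hl2 := hly 1 (hasFaceChainOfLength_one (isFaceOf_minFace hM.convex hyM).2.1
    ⟨y, mem_minFace_self⟩)
  have hlF m (hm : HasFaceChainOfLength (minFace (M ∩ {w | g w = 0}) y) m) : m ≤ l - 1 := by
    rw [hF.minFace_eq hM.convex ⟨hyM, hgy⟩] at hm
    have := hly m hm
    omega
  have hsum := (IH _ (h ▸ setDim_inter_ker_lt (hM.zero_mem hx) hg) (hM.inter_ker g) ⟨hyM, hgy⟩
    hlF rfl).of_isFaceOf hF |>.add hR (hR.1.smul_mem hM.smul_mem hr ht)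
  rwa [show l - 1 - 1 + 1 = l - 1 by omega, show t • r + y = x by simp [y]] at hsum

end IsPointedClosedConvexCone

end Cone

/-- For a pointed closed convex cone `K` and `x ∈ K`, `x` is a sum of at most
`ℓ − 1` elements of extreme rays of `K`, where `ℓ` is the length of the longest chain of
nonempty faces of the minimal face of `K` containing `x`. -/
theorem caratheodory_stmt6 {n : ℕ} (K : Set (EuclideanSpace ℝ (Fin n)))
    (hconv : Convex ℝ K)
    (hcone : ∀ (c : ℝ), 0 ≤ c → ∀ y ∈ K, c • y ∈ K)
    (hclosed : IsClosed K)
    (hpointed : K ∩ (-K) = {0})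
    (x : EuclideanSpace ℝ (Fin n)) (hx : x ∈ K)
    (l : ℕ) (hl : IsLongestFaceChainLength (minFace K x) l) :
    IsSumOfExtremeRayElems K (l - 1) x := by
  have hK : IsPointedClosedConvexCone K := ⟨hconv, hclosed, hcone, fun a ha hna => by
    have ha' : a ∈ K ∩ -K := ⟨ha, Set.mem_neg.2 hna⟩
    rwa [hpointed] at ha'⟩
  exact hK.isSumOfExtremeRayElems hx hl.2
end

section
/- Let K ⊆ ℝⁿ be a pointed closed convex cone with nonempty interior and dim K ≥ 2 such that every face of K other than {0} and K itself is one-dimensional (a smooth cone). Then every element of K is a sum of at most 2 elements belonging to extreme rays, and the longest chain of faces of K has length 3. -/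
section Helpers

lemma face_cone {E : Type*} [AddCommGroup E] [Module ℝ E] {K F : Set E}
    (hcone : ∀ (c : ℝ), 0 ≤ c → ∀ y ∈ K, c • y ∈ K)
    (hF : IsFaceOf K F) : ∀ z ∈ F, ∀ c : ℝ, 0 ≤ c → c • z ∈ F := by
  obtain ⟨hsub, hcv, hface⟩ := hF
  intro z hz c hc
  have hzK := hsub hz
  have h0K : (0:E) ∈ K := by simpa using hcone 0 le_rfl z hzK
  have h2K : (2:ℝ) • z ∈ K := hcone 2 (by norm_num) z hzK
  have key : (2:ℝ) • z ∈ F ∧ (0:E) ∈ F := by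
    refine hface h2K h0K (a := 1/2) (by norm_num) (by norm_num) ?_
    have h : (1/2 : ℝ) • ((2:ℝ) • z) + (1 - 1/2 : ℝ) • (0:E) = z := by
      rw [smul_smul]; norm_num
    rwa [h]
  obtain ⟨h2F, h0F⟩ := key
  rcases le_or_gt c 1 with h1 | h1
  · have := hcv hz h0F hc (by linarith : (0:ℝ) ≤ 1 - c) (by ring)
    simpa using this
  · have hcK : c • z ∈ K := hcone c (by linarith) z hzK
    have := hface hcK h0K (a := 1/c) (by positivity) (by rw [div_lt_one (by linarith)]; linarith) ?_
    · exact this.1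
    · have h : (1/c : ℝ) • (c • z) + (1 - 1/c : ℝ) • (0:E) = z := by
        rw [smul_smul]; field_simp; simp
      rwa [h]

lemma vectorSpan_eq_span {E : Type*} [AddCommGroup E] [Module ℝ E] {S : Set E}
    (h0 : (0:E) ∈ S) : vectorSpan ℝ S = Submodule.span ℝ S := by
  apply le_antisymm
  · rw [vectorSpan_def]
    apply Submodule.span_le.2
    rintro d hd
    rw [Set.mem_vsub] at hd
    obtain ⟨a, ha, b, hb, rfl⟩ := hd
    exact sub_mem (Submodule.subset_span ha) (Submodule.subset_span hb)
  · apply Submodule.span_le.2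
    intro s hs
    have : s - 0 ∈ S -ᵥ S := Set.vsub_mem_vsub hs h0
    rw [vectorSpan_def]; simpa using Submodule.subset_span this

variable {n : ℕ} {K : Set (EuclideanSpace ℝ (Fin n))}

/-- A nonzero non-interior point of `K` lies on an extreme ray. -/
lemma boundary_extreme_ray (hconv : Convex ℝ K)
    (hcone : ∀ (c : ℝ), 0 ≤ c → ∀ y ∈ K, c • y ∈ K)
    (hint : (interior K).Nonempty)
    (hsmooth : ∀ F : Set (EuclideanSpace ℝ (Fin n)),
      IsFaceOf K F → F.Nonempty → F ≠ {0} → F ≠ K → setDim F = 1)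
    {y : EuclideanSpace ℝ (Fin n)} (hyK : y ∈ K) (hyi : y ∉ interior K) (hy0 : y ≠ 0) :
    ∃ R, IsExtremeRay K R ∧ y ∈ R := by
  obtain ⟨f, hf⟩ := geometric_hahn_banach_point_open (hconv.interior) isOpen_interior hyi
  obtain ⟨w, hw⟩ := hint
  have hKle : ∀ z ∈ K, f y ≤ f z := by
    intro z hz
    by_contra hlt
    push_neg at hlt
    have hwy : f y < f w := hf w hw
    set a : ℝ := min (1/2) ((f y - f z) / (2 * (f w - f z))) with ha
    have hfz : f z < f y := hlt
    have hden : 0 < f w - f z := by linarith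
    have ha0 : 0 < a := by
      apply lt_min (by norm_num)
      exact div_pos (by linarith) (by linarith)
    have ha1 : a ≤ 1/2 := min_le_left _ _
    have hmem : a • w + (1 - a) • z ∈ interior K :=
      hconv.combo_interior_self_mem_interior hw hz ha0 (by linarith) (by ring)
    have := hf _ hmem
    rw [map_add, map_smul, map_smul] at this
    have hkey : a * (f w - f z) ≤ (f y - f z) / 2 := by
      have h2 : a ≤ (f y - f z) / (2 * (f w - f z)) := min_le_right _ _
      calc a * (f w - f z) ≤ ((f y - f z) / (2 * (f w - f z))) * (f w - f z) := by
            apply mul_le_mul_of_nonneg_right h2 hden.le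
        _ = (f y - f z) / 2 := by field_simp
    simp only [smul_eq_mul] at this
    nlinarith
  have h0K : (0 : EuclideanSpace ℝ (Fin n)) ∈ K := by simpa using hcone 0 le_rfl y hyK
  have h2K : (2:ℝ) • y ∈ K := hcone 2 (by norm_num) y hyK
  have hfy0 : f y = 0 := by
    have h1 := hKle 0 h0K
    have h2 := hKle _ h2K
    rw [map_smul] at h2
    simp at h1 h2
    linarith
  have hKnn : ∀ z ∈ K, 0 ≤ f z := fun z hz => hfy0 ▸ hKle z hz
  set F : Set (EuclideanSpace ℝ (Fin n)) := {z ∈ K | f z = 0} with hFdef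
  have hface : IsFaceOf K F := by
    refine ⟨fun z hz => hz.1, ?_, ?_⟩
    · intro p hp q hq a b ha hb hab
      exact ⟨hconv hp.1 hq.1 ha hb hab, by
        rw [map_add, map_smul, map_smul, hp.2, hq.2]; simp⟩
    · intro p hp q hq a ha ha1 hmem
      have h1 : a * f p + (1 - a) * f q = 0 := by
        have := hmem.2
        rwa [map_add, map_smul, map_smul] at this
      have hp' := hKnn p hp
      have hq' := hKnn q hq
      have hfp : f p = 0 := by nlinarith
      have hfq : f q = 0 := by nlinarith
      exact ⟨⟨hp, hfp⟩, ⟨hq, hfq⟩⟩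
  have hyF : y ∈ F := ⟨hyK, hfy0⟩
  have hFne : F.Nonempty := ⟨y, hyF⟩
  have hFne0 : F ≠ {0} := by
    intro h
    rw [h] at hyF
    exact hy0 hyF
  have hFneK : F ≠ K := by
    intro h
    have hwK : w ∈ K := interior_subset hw
    have hwF : w ∈ F := h ▸ hwK
    have hwy : f y < f w := hf w hw
    rw [hwF.2, hfy0] at hwy
    exact lt_irrefl 0 hwy
  exact ⟨F, ⟨hface, hsmooth F hface hFne hFne0 hFneK⟩, hyF⟩

/-- Exit point: moving from `x ∈ K` in direction `d ∉ K`, we eventually leave the interior. -/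
lemma exit_point (hclosed : IsClosed K)
    (hcone : ∀ (c : ℝ), 0 ≤ c → ∀ y ∈ K, c • y ∈ K)
    {x d : EuclideanSpace ℝ (Fin n)} (hx : x ∈ K) (hd : d ∉ K) :
    ∃ t : ℝ, 0 ≤ t ∧ x + t • d ∈ K ∧ x + t • d ∉ interior K := by
  set S : Set ℝ := {t : ℝ | 0 ≤ t ∧ x + t • d ∈ K} with hS
  have hSne : (0:ℝ) ∈ S := by simp [hS, hx]
  have hopen : IsOpen Kᶜ := hclosed.isOpen_compl
  obtain ⟨ε, hε, hball⟩ := Metric.isOpen_iff.1 hopen d hd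
  have hbdd : BddAbove S := by
    refine ⟨max 1 (‖x‖ / ε), ?_⟩
    rintro t ⟨ht0, htK⟩
    rcases le_or_gt t 1 with h | h
    · exact le_max_of_le_left h
    · have ht : 0 < t := by linarith
      have hmem : (1/t) • (x + t • d) ∈ K := hcone (1/t) (by positivity) _ htK
      have heq : (1/t) • (x + t • d) = (1/t) • x + d := by
        rw [smul_add, smul_smul]
        field_simp; simp
      rw [heq] at hmem
      have hdist : ε ≤ dist ((1/t) • x + d) d := by
        by_contra hlt
        push_neg at hlt
        exact hball (Metric.mem_ball.2 hlt) hmem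
      have hde : dist ((1/t) • x + d) d = ‖x‖ / t := by
        rw [dist_eq_norm]
        simp [norm_smul, abs_of_pos ht]
        ring
      rw [hde] at hdist
      have hxt : ‖x‖ / ε ≥ t := by
        rw [ge_iff_le, le_div_iff₀ hε]
        calc t * ε ≤ t * (‖x‖ / t) := by nlinarith
          _ = ‖x‖ := by field_simp
      exact le_max_of_le_right hxt
  have hSclosed : IsClosed S := by
    have h1 : IsClosed {t : ℝ | 0 ≤ t} := isClosed_Ici
    have h2 : IsClosed {t : ℝ | x + t • d ∈ K} :=
      IsClosed.preimage (by continuity) hclosed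
    exact h1.inter h2
  set t₀ := sSup S with ht₀
  have ht₀S : t₀ ∈ S := hSclosed.csSup_mem ⟨0, hSne⟩ hbdd
  refine ⟨t₀, ht₀S.1, ht₀S.2, ?_⟩
  intro hmem
  obtain ⟨δ, hδ, hball2⟩ := Metric.isOpen_iff.1 isOpen_interior _ hmem
  have hd0 : d ≠ 0 := by rintro rfl; exact hd (by simpa using hcone 0 le_rfl x hx)
  have hdn : 0 < ‖d‖ := norm_pos_iff.2 hd0
  set η := δ / (2 * ‖d‖) with hη
  have hη0 : 0 < η := div_pos hδ (by linarith)
  have hmem2 : x + (t₀ + η) • d ∈ K := by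
    apply interior_subset
    apply hball2
    rw [Metric.mem_ball, dist_eq_norm]
    have heq : x + (t₀ + η) • d - (x + t₀ • d) = η • d := by
      rw [add_smul]; abel
    rw [heq, norm_smul, Real.norm_eq_abs, abs_of_pos hη0, hη]
    rw [div_mul_eq_mul_div]
    rw [div_lt_iff₀ (by linarith)]
    nlinarith
  have hmem3 : t₀ + η ∈ S := ⟨by linarith [ht₀S.1], hmem2⟩
  have := le_csSup hbdd hmem3
  linarith

/-- A dim-1 face is contained in any face of `K` having a nonzero element inside it. -/
lemma dim_one_face_subset
    (hcone : ∀ (c : ℝ), 0 ≤ c → ∀ y ∈ K, c • y ∈ K)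
    (hpointed : K ∩ (-K) = {0})
    {F G : Set (EuclideanSpace ℝ (Fin n))}
    (hF : IsFaceOf K F) (hG : IsFaceOf K G) (hGF : G ⊆ F)
    (hFdim : setDim F = 1) {g : EuclideanSpace ℝ (Fin n)} (hg : g ∈ G) (hg0 : g ≠ 0) :
    F ⊆ G := by
  have hgF : g ∈ F := hGF hg
  have h0F : (0 : EuclideanSpace ℝ (Fin n)) ∈ F := by
    simpa using face_cone hcone hF g hgF 0 le_rfl
  have h0G : (0 : EuclideanSpace ℝ (Fin n)) ∈ G := by
    simpa using face_cone hcone hG g hg 0 le_rfl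
  have hspan : vectorSpan ℝ F = Submodule.span ℝ F := vectorSpan_eq_span h0F
  have hrank : Module.finrank ℝ (Submodule.span ℝ F) = 1 := by
    rw [← hspan]; exact hFdim
  have hle : (Submodule.span ℝ {g}) ≤ Submodule.span ℝ F :=
    Submodule.span_mono (Set.singleton_subset_iff.2 hgF)
  have heq : (Submodule.span ℝ {g}) = Submodule.span ℝ F :=
    Submodule.eq_of_le_of_finrank_eq hle (by rw [finrank_span_singleton hg0, hrank])
  intro z hz
  have hzsp : z ∈ Submodule.span ℝ ({g} : Set (EuclideanSpace ℝ (Fin n))) := by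
    rw [heq]; exact Submodule.subset_span hz
  obtain ⟨s, rfl⟩ := Submodule.mem_span_singleton.1 hzsp
  have hzK : s • g ∈ K := hF.1 hz
  rcases lt_trichotomy s 0 with hs | hs | hs
  · have hnegK : -(s • g) ∈ K := by
      have := hcone (-s) (by linarith) g (hG.1 hg)
      simpa [neg_smul] using this
    have hmm : s • g ∈ K ∩ (-K) := ⟨hzK, by simpa [Set.mem_neg] using hnegK⟩
    rw [hpointed] at hmm
    simp only [Set.mem_singleton_iff] at hmm
    rw [hmm]; exact h0G
  · rw [hs, zero_smul]; exact h0G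
  · rcases le_or_gt s 1 with h1 | h1
    · have := hG.2.1 hg h0G (le_of_lt hs) (by linarith : (0:ℝ) ≤ 1 - s) (by ring)
      simpa using this
    · have h0K : (0 : EuclideanSpace ℝ (Fin n)) ∈ K := by
        simpa using hcone 0 le_rfl g (hG.1 hg)
      have hmem : (1/s : ℝ) • (s • g) + (1 - 1/s : ℝ) • (0 : EuclideanSpace ℝ (Fin n)) ∈ G := by
        have h : (1/s : ℝ) • (s • g) + (1 - 1/s : ℝ) • (0 : EuclideanSpace ℝ (Fin n)) = g := by
          rw [smul_smul]; field_simp; simp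
        rw [h]; exact hg
      exact (hG.2.2 hzK h0K (by positivity)
        (by rw [div_lt_one (by linarith)]; linarith) hmem).1

/-- Existence of an extreme ray with a nonzero element. -/
lemma exists_extreme_ray (hconv : Convex ℝ K)
    (hcone : ∀ (c : ℝ), 0 ≤ c → ∀ y ∈ K, c • y ∈ K)
    (hclosed : IsClosed K)
    (hpointed : K ∩ (-K) = {0})
    (hint : (interior K).Nonempty)
    (hdim : 2 ≤ setDim K)
    (hsmooth : ∀ F : Set (EuclideanSpace ℝ (Fin n)),
      IsFaceOf K F → F.Nonempty → F ≠ {0} → F ≠ K → setDim F = 1) :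
    ∃ R v, IsExtremeRay K R ∧ v ∈ R ∧ v ≠ 0 := by
  have hn2 : 2 ≤ n := by
    have h1 : setDim K ≤ n := by
      have := Submodule.finrank_le (vectorSpan ℝ K)
      simpa [setDim, finrank_euclideanSpace_fin] using this
    omega
  obtain ⟨w, hw⟩ := hint
  -- K is not everything
  have hKneU : ∃ p, p ∉ K := by
    by_contra h
    push_neg at h
    set e : EuclideanSpace ℝ (Fin n) := EuclideanSpace.single (⟨0, by omega⟩ : Fin n) (1:ℝ)
    have he : e ∈ K ∩ (-K) := ⟨h e, by simpa [Set.mem_neg] using h (-e)⟩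
    rw [hpointed] at he
    simp only [Set.mem_singleton_iff] at he
    have := congrArg (fun v : EuclideanSpace ℝ (Fin n) => v (⟨0, by omega⟩ : Fin n)) he
    simp [e, EuclideanSpace.single_apply] at this
  obtain ⟨p, hp⟩ := hKneU
  -- there is z outside the span of w
  have hz : ∃ z : EuclideanSpace ℝ (Fin n), z ∉ Submodule.span ℝ {w} := by
    by_contra h
    push_neg at h
    have htop : Submodule.span ℝ ({w} : Set (EuclideanSpace ℝ (Fin n))) = ⊤ :=
      Submodule.eq_top_iff'.2 h
    have h1 : Module.finrank ℝ (Submodule.span ℝ ({w} : Set (EuclideanSpace ℝ (Fin n)))) ≤ 1 := by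
      rcases eq_or_ne w 0 with rfl | hw0
      · rw [Submodule.span_zero_singleton]; simp
      · rw [finrank_span_singleton hw0]
    rw [htop, finrank_top, finrank_euclideanSpace_fin] at h1
    omega
  obtain ⟨z, hzw⟩ := hz
  -- find u ∉ K with u ∉ span {w}
  have hu : ∃ u, u ∉ K ∧ u ∉ Submodule.span ℝ ({w} : Set (EuclideanSpace ℝ (Fin n))) := by
    by_cases hps : p ∈ Submodule.span ℝ ({w} : Set (EuclideanSpace ℝ (Fin n)))
    · obtain ⟨ε, hε, hball⟩ := Metric.isOpen_iff.1 hclosed.isOpen_compl p hp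
      have hzn : 0 < ‖z‖ := by
        rw [norm_pos_iff]
        rintro rfl
        exact hzw (Submodule.zero_mem _)
      set η := ε / (2 * ‖z‖) with hη
      have hη0 : 0 < η := div_pos hε (by linarith)
      refine ⟨p + η • z, ?_, ?_⟩
      · apply hball
        rw [Metric.mem_ball, dist_eq_norm]
        have heq : p + η • z - p = η • z := by abel
        rw [heq, norm_smul, Real.norm_eq_abs, abs_of_pos hη0, hη, div_mul_eq_mul_div,
          div_lt_iff₀ (by linarith)]
        nlinarith
      · intro hmem
        apply hzw
        have : η • z = (p + η • z) - p := by abel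
        have hzz : η • z ∈ Submodule.span ℝ ({w} : Set (EuclideanSpace ℝ (Fin n))) := by
          rw [this]; exact sub_mem hmem hps
        have := Submodule.smul_mem _ (η⁻¹) hzz
        rwa [smul_smul, inv_mul_cancel₀ (ne_of_gt hη0), one_smul] at this
    · exact ⟨p, hp, hps⟩
  obtain ⟨u, huK, husp⟩ := hu
  obtain ⟨t, ht0, hyK, hyi⟩ := exit_point hclosed hcone (interior_subset hw) huK
  set y := w + t • u with hy
  have hy0 : y ≠ 0 := by
    intro h0
    rcases eq_or_lt_of_le ht0 with h | h
    · have hyw : y = w := by rw [hy, ← h]; simp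
      exact hyi (hyw ▸ hw)
    · apply husp
      have : u = (-(1/t)) • w := by
        have h1 : t • u = -w := by
          have := h0
          rw [hy] at this
          linear_combination (norm := module) this
        have := congrArg (fun v => (1/t) • v) h1
        rw [smul_smul] at this
        rw [one_div, inv_mul_cancel₀ (ne_of_gt h), one_smul] at this
        rw [this]
        module
      rw [this]
      exact Submodule.smul_mem _ _ (Submodule.mem_span_singleton_self w)
  obtain ⟨R, hR, hyR⟩ := boundary_extreme_ray hconv hcone ⟨w, hw⟩ hsmooth hyK hyi hy0
  exact ⟨R, y, hR, hyR, hy0⟩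

end Helpers

/-- Let `K` be a pointed closed convex cone with nonempty interior and
`dim K ≥ 2` such that every nonempty face other than `{0}` and `K` is one-dimensional
(a smooth cone). Then every element of `K` is a sum of at most 2 elements of extreme rays,
and the longest chain of nonempty faces of `K` has length 3. -/
theorem caratheodory_stmt14 {n : ℕ} (K : Set (EuclideanSpace ℝ (Fin n)))
    (hconv : Convex ℝ K)
    (hcone : ∀ (c : ℝ), 0 ≤ c → ∀ y ∈ K, c • y ∈ K)
    (hclosed : IsClosed K)
    (hpointed : K ∩ (-K) = {0})
    (hint : (interior K).Nonempty)
    (hdim : 2 ≤ setDim K)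
    (hsmooth : ∀ F : Set (EuclideanSpace ℝ (Fin n)),
      IsFaceOf K F → F.Nonempty → F ≠ {0} → F ≠ K → setDim F = 1) :
    (∀ x ∈ K, IsSumOfExtremeRayElems K 2 x) ∧ IsLongestFaceChainLength K 3 := by
  obtain ⟨R, v, hR, hvR, hv0⟩ :=
    exists_extreme_ray hconv hcone hclosed hpointed hint hdim hsmooth
  have hvK : v ∈ K := hR.1.1 hvR
  have h0K : (0 : EuclideanSpace ℝ (Fin n)) ∈ K := by
    simpa using hcone 0 le_rfl v hvK
  have h0R : (0 : EuclideanSpace ℝ (Fin n)) ∈ R := by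
    simpa using face_cone hcone hR.1 v hvR 0 le_rfl
  constructor
  · -- every element is a sum of at most 2 extreme-ray elements
    intro x hx
    by_cases hx0 : x = 0
    · exact ⟨0, by norm_num, fun i => i.elim0, fun i => i.elim0, by simp [hx0]⟩
    · have hnv : -v ∉ K := by
        intro h
        apply hv0
        have : v ∈ K ∩ (-K) := ⟨hvK, by simpa [Set.mem_neg] using h⟩
        rw [hpointed] at this
        simpa using this
      obtain ⟨t, ht0, hyK, hyi⟩ := exit_point hclosed hcone hx hnv
      have htvR : t • v ∈ R := face_cone hcone hR.1 v hvR t ht0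
      by_cases hy0 : x + t • (-v) = 0
      · refine ⟨2, le_rfl, ![t • v, 0], ?_, ?_⟩
        · intro i
          fin_cases i
          · exact ⟨R, hR, by simp [htvR]⟩
          · exact ⟨R, hR, by simp [h0R]⟩
        · rw [Fin.sum_univ_two]
          simp only [Matrix.cons_val_zero, Matrix.cons_val_one, Matrix.head_cons]
          have : x = t • v := by
            have := hy0
            rw [smul_neg] at this
            linear_combination (norm := module) this
          rw [← this, add_zero]
      · obtain ⟨R', hR', hyR'⟩ :=
          boundary_extreme_ray hconv hcone hint hsmooth hyK hyi hy0
        refine ⟨2, le_rfl, ![t • v, x + t • (-v)], ?_, ?_⟩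
        · intro i
          fin_cases i
          · exact ⟨R, hR, by simp [htvR]⟩
          · exact ⟨R', hR', by simpa using hyR'⟩
        · rw [Fin.sum_univ_two]
          simp only [Matrix.cons_val_zero, Matrix.cons_val_one, Matrix.head_cons]
          module
  · -- longest chain has length 3
    have hfaceK : IsFaceOf K K := ⟨subset_rfl, hconv, fun x hx y hy a _ _ _ => ⟨hx, hy⟩⟩
    have hface0 : IsFaceOf K {0} := by
      refine ⟨Set.singleton_subset_iff.2 h0K, convex_singleton 0, ?_⟩
      intro x hxK y hyK a ha ha1 hm
      rw [Set.mem_singleton_iff] at hm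
      have hxy : a • x = (-(1-a)) • y := by linear_combination (norm := module) hm
      have hmx : -x = (a⁻¹ * (1-a)) • y := by
        have h2 : x = a⁻¹ • ((-(1-a)) • y) := by
          rw [← hxy, smul_smul, inv_mul_cancel₀ (ne_of_gt ha), one_smul]
        rw [h2, smul_smul]
        module
      have hxneg : x ∈ -K := by
        rw [Set.mem_neg, hmx]
        exact hcone _ (mul_nonneg (inv_nonneg.2 (le_of_lt ha)) (by linarith)) y hyK
      have hx0 : x = 0 := by
        have : x ∈ K ∩ (-K) := ⟨hxK, hxneg⟩
        rw [hpointed] at this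
        simpa using this
      have hy0 : y = 0 := by
        rw [hx0, smul_zero] at hm
        simp only [zero_add] at hm
        rcases smul_eq_zero.1 hm with h | h
        · linarith
        · exact h
      exact ⟨by simp [hx0], by simp [hy0]⟩
    have hRK : R ⊂ K := by
      refine ⟨hR.1.1, fun hsub => ?_⟩
      have : R = K := le_antisymm hR.1.1 hsub
      rw [← this] at hdim
      rw [hR.2] at hdim
      omega
    have h0R' : ({0} : Set (EuclideanSpace ℝ (Fin n))) ⊂ R := by
      refine ⟨Set.singleton_subset_iff.2 h0R, fun hsub => ?_⟩
      exact hv0 (hsub hvR)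
    constructor
    · refine ⟨![K, R, {0}], ?_, ?_⟩
      · intro i j hij
        fin_cases i <;> fin_cases j <;>
          simp only [Fin.mk_lt_mk, Matrix.cons_val_zero, Matrix.cons_val_one,
            Matrix.head_cons, Matrix.cons_val_two, Matrix.tail_cons] at hij ⊢ <;>
          first
            | omega
            | exact hRK
            | exact h0R'
            | exact h0R'.trans hRK
      · intro i
        fin_cases i <;>
          simp only [Matrix.cons_val_zero, Matrix.cons_val_one, Matrix.head_cons,
            Matrix.cons_val_two, Matrix.tail_cons]
        · exact ⟨hfaceK, ⟨0, h0K⟩⟩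
        · exact ⟨hR.1, ⟨0, h0R⟩⟩
        · exact ⟨hface0, ⟨0, rfl⟩⟩
    · intro m hm
      by_contra hgt
      push_neg at hgt
      obtain ⟨c, hanti, hface⟩ := hm
      have h4 : 4 ≤ m := hgt
      set i0 : Fin m := ⟨0, by omega⟩ with hi0
      set i1 : Fin m := ⟨1, by omega⟩ with hi1
      set i2 : Fin m := ⟨2, by omega⟩ with hi2
      set i3 : Fin m := ⟨3, by omega⟩ with hi3
      have h01 : c i1 ⊂ c i0 := hanti (by simp [hi0, hi1, Fin.lt_def])
      have h12 : c i2 ⊂ c i1 := hanti (by simp [hi1, hi2, Fin.lt_def])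
      have h23 : c i3 ⊂ c i2 := hanti (by simp [hi2, hi3, Fin.lt_def])
      have hc1K : c i1 ≠ K := fun h => h01.2 (h ▸ (hface i0).1.1)
      have hc2K : c i2 ≠ K := fun h => h12.2 (h ▸ (hface i1).1.1)
      have hc2ne0 : c i2 ≠ {0} := by
        intro h
        have hsub : c i3 ⊆ ({0} : Set (EuclideanSpace ℝ (Fin n))) := h ▸ h23.1
        rcases Set.subset_singleton_iff_eq.1 hsub with he | he
        · exact (hface i3).2.ne_empty he
        · exact h23.2 (by rw [h, he])
      have hc1ne0 : c i1 ≠ {0} := by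
        intro h
        have hsub : c i2 ⊆ ({0} : Set (EuclideanSpace ℝ (Fin n))) := h ▸ h12.1
        rcases Set.subset_singleton_iff_eq.1 hsub with he | he
        · exact (hface i2).2.ne_empty he
        · exact hc2ne0 he
      have hdim1 : setDim (c i1) = 1 :=
        hsmooth _ (hface i1).1 (hface i1).2 hc1ne0 hc1K
      have hg : ∃ g ∈ c i2, g ≠ 0 := by
        by_contra h
        push_neg at h
        apply hc2ne0
        have h0c2 : (0 : EuclideanSpace ℝ (Fin n)) ∈ c i2 := by
          obtain ⟨g0, hg0⟩ := (hface i2).2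
          simpa using face_cone hcone (hface i2).1 g0 hg0 0 le_rfl
        exact Set.eq_singleton_iff_unique_mem.2 ⟨h0c2, fun g hgm => h g hgm⟩
      obtain ⟨g, hgm, hg0⟩ := hg
      have hsub : c i1 ⊆ c i2 :=
        dim_one_face_subset hcone hpointed (hface i1).1 (hface i2).1 h12.1 hdim1 hgm hg0
      exact h12.2 hsub
end

section
/- Let K = {(x,t) ∈ ℝⁿ × ℝ : t ≥ sqrt(x₁² + ⋯ + xₙ²), x₂ ≥ 0, …, xₙ ≥ 0} with n ≥ 1. Then every element of K can be written as a sum of at most 2 elements belonging to extreme rays of K, while the longest chain of faces of K has length n + 2. -/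
/-! ### Auxiliary material -/

def K15 (n : ℕ) : Set (EuclideanSpace ℝ (Fin n) × ℝ) :=
  {p | ‖p.1‖ ≤ p.2 ∧ ∀ i : Fin n, (i : ℕ) ≠ 0 → 0 ≤ p.1 i}

noncomputable def ray15 {n : ℕ} (v : EuclideanSpace ℝ (Fin n)) :
    Set (EuclideanSpace ℝ (Fin n) × ℝ) :=
  {p | ∃ c : ℝ, 0 ≤ c ∧ p = (c • v, c * ‖v‖)}

lemma ray15_subset {n : ℕ} (v : EuclideanSpace ℝ (Fin n))
    (hvc : ∀ i : Fin n, (i : ℕ) ≠ 0 → 0 ≤ v i) : ray15 v ⊆ K15 n := by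
  rintro p ⟨c, hc, rfl⟩
  constructor
  · show ‖c • v‖ ≤ c * ‖v‖
    rw [norm_smul, Real.norm_eq_abs, abs_of_nonneg hc]
  · intro i hi
    exact mul_nonneg hc (hvc i hi)

lemma ray15_convex {n : ℕ} (v : EuclideanSpace ℝ (Fin n)) : Convex ℝ (ray15 v) := by
  rintro p ⟨c, hc, rfl⟩ q ⟨d, hd, rfl⟩ a b ha hb hab
  refine ⟨a * c + b * d, by positivity, ?_⟩
  have h1 : (a • ((c • v : EuclideanSpace ℝ (Fin n)), c * ‖v‖)
      + b • ((d • v : EuclideanSpace ℝ (Fin n)), d * ‖v‖)).1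
      = ((a * c + b * d) • v : EuclideanSpace ℝ (Fin n)) := by
    show a • (c • v) + b • (d • v) = (a * c + b * d) • v
    rw [smul_smul, smul_smul, add_smul]
  have h2 : (a • ((c • v : EuclideanSpace ℝ (Fin n)), c * ‖v‖)
      + b • ((d • v : EuclideanSpace ℝ (Fin n)), d * ‖v‖)).2 = (a * c + b * d) * ‖v‖ := by
    show a * (c * ‖v‖) + b * (d * ‖v‖) = (a * c + b * d) * ‖v‖
    ring
  exact Prod.ext h1 h2

lemma ray15_isExtremeRay {n : ℕ} (v : EuclideanSpace ℝ (Fin n)) (hv : v ≠ 0)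
    (hvc : ∀ i : Fin n, (i : ℕ) ≠ 0 → 0 ≤ v i) : IsExtremeRay (K15 n) (ray15 v) := by
  constructor
  · refine ⟨ray15_subset v hvc, ray15_convex v, ?_⟩
    rintro u hu w hw a ha ha1 ⟨c, hc, hcomb⟩
    have ha1' : (0:ℝ) < 1 - a := by linarith
    have hfst : a • u.1 + (1 - a) • w.1 = c • v := congrArg Prod.fst hcomb
    have hsnd : a * u.2 + (1 - a) * w.2 = c * ‖v‖ := congrArg Prod.snd hcomb
    have h1 : ‖u.1‖ ≤ u.2 := hu.1
    have h2 : ‖w.1‖ ≤ w.2 := hw.1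
    have hnc : ‖a • u.1 + (1 - a) • w.1‖ = c * ‖v‖ := by
      rw [hfst, norm_smul, Real.norm_eq_abs, abs_of_nonneg hc]
    have hle : ‖a • u.1 + (1 - a) • w.1‖ ≤ a * ‖u.1‖ + (1 - a) * ‖w.1‖ := by
      calc ‖a • u.1 + (1 - a) • w.1‖ ≤ ‖a • u.1‖ + ‖(1 - a) • w.1‖ := norm_add_le _ _
      _ = a * ‖u.1‖ + (1 - a) * ‖w.1‖ := by
          rw [norm_smul, norm_smul, Real.norm_eq_abs, Real.norm_eq_abs,
            abs_of_nonneg ha.le, abs_of_nonneg ha1'.le]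
    have heq1 : a * ‖u.1‖ = a * u.2 := by nlinarith
    have heq2 : (1 - a) * ‖w.1‖ = (1 - a) * w.2 := by nlinarith
    have hu2 : ‖u.1‖ = u.2 := mul_left_cancel₀ ha.ne' heq1
    have hw2 : ‖w.1‖ = w.2 := mul_left_cancel₀ ha1'.ne' heq2
    have hkey : ‖a • u.1 + (1 - a) • w.1‖ = ‖a • u.1‖ + ‖(1 - a) • w.1‖ := by
      rw [norm_smul, norm_smul, Real.norm_eq_abs, Real.norm_eq_abs,
        abs_of_nonneg ha.le, abs_of_nonneg ha1'.le]
      nlinarith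
    have hsr : SameRay ℝ (a • u.1) ((1 - a) • w.1) := sameRay_iff_norm_add.2 hkey
    obtain ⟨q, r, s, hr, hs, hrs, hA, hB⟩ := hsr.exists_eq_smul
    have hq : q = c • v := by
      have : (r + s) • q = c • v := by rw [add_smul, ← hA, ← hB, hfst]
      rwa [hrs, one_smul] at this
    have hu1 : u.1 = (a⁻¹ * r * c) • v := by
      have : a⁻¹ • (a • u.1) = a⁻¹ • (r • q) := by rw [hA]
      rw [inv_smul_smul₀ ha.ne'] at this
      rw [this, hq, smul_smul, smul_smul, mul_assoc]
    have hw1 : w.1 = ((1 - a)⁻¹ * s * c) • v := by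
      have : (1 - a)⁻¹ • ((1 - a) • w.1) = (1 - a)⁻¹ • (s • q) := by rw [hB]
      rw [inv_smul_smul₀ ha1'.ne'] at this
      rw [this, hq, smul_smul, smul_smul, mul_assoc]
    have ht1 : 0 ≤ a⁻¹ * r * c := by positivity
    have ht2 : 0 ≤ (1 - a)⁻¹ * s * c := by positivity
    constructor
    · exact ⟨a⁻¹ * r * c, ht1, Prod.ext hu1 (by
        rw [← hu2, hu1, norm_smul, Real.norm_eq_abs, abs_of_nonneg ht1])⟩
    · exact ⟨(1 - a)⁻¹ * s * c, ht2, Prod.ext hw1 (by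
        rw [← hw2, hw1, norm_smul, Real.norm_eq_abs, abs_of_nonneg ht2])⟩
  · show Module.finrank ℝ (vectorSpan ℝ (ray15 v)) = 1
    have hvs : vectorSpan ℝ (ray15 v)
        = Submodule.span ℝ {((v, ‖v‖) : EuclideanSpace ℝ (Fin n) × ℝ)} := by
      apply le_antisymm
      · rw [vectorSpan_def, Submodule.span_le]
        rintro z ⟨p, ⟨c, hc, rfl⟩, q, ⟨d, hd, rfl⟩, rfl⟩
        refine Submodule.mem_span_singleton.2 ⟨c - d, ?_⟩
        show (c - d) • (v, ‖v‖) = _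
        rw [Prod.smul_mk]
        show _ = ((c • v - d • v : EuclideanSpace ℝ (Fin n)), c * ‖v‖ - d * ‖v‖)
        rw [sub_smul]
        congr 1
        show (c - d) * ‖v‖ = _
        ring
      · rw [Submodule.span_singleton_le_iff_mem]
        have h1 : ((v, ‖v‖) : EuclideanSpace ℝ (Fin n) × ℝ) ∈ ray15 v :=
          ⟨1, zero_le_one, by rw [one_smul, one_mul]⟩
        have h0 : ((0, 0) : EuclideanSpace ℝ (Fin n) × ℝ) ∈ ray15 v :=
          ⟨0, le_refl 0, by rw [zero_smul, zero_mul]⟩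
        have := vsub_mem_vectorSpan ℝ h1 h0
        simpa using this
    rw [hvs]
    apply finrank_span_singleton
    simp [Prod.ext_iff, hv]

lemma isFaceOf_trans {E : Type*} [AddCommGroup E] [Module ℝ E] {S S' F : Set E}
    (hF : IsFaceOf S F) (hFS' : F ⊆ S') (hS'S : S' ⊆ S) : IsFaceOf S' F :=
  ⟨hFS', hF.2.1, fun _ hx _ hy _ ha ha1 h => hF.2.2 (hS'S hx) (hS'S hy) ha ha1 h⟩

private lemma comb_eq {E : Type*} [AddCommGroup E] [Module ℝ E] (y z : E) {c : ℝ} (hc : 0 < c) :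
    (c / (1 + c)) • y + (1 - c / (1 + c)) • (c • (z - y) + z) = z := by
  have h1c : (0:ℝ) < 1 + c := by linarith
  have h2 : (1 : ℝ) - c / (1 + c) = 1 / (1 + c) := by field_simp; ring
  have h3 : (1 / (1 + c)) * c = c / (1 + c) := by ring
  rw [h2, smul_add, smul_smul, h3, smul_sub]
  have h4 : (c / (1 + c)) • z + (1 / (1 + c)) • z = z := by
    rw [← add_smul]
    have : c / (1 + c) + 1 / (1 + c) = 1 := by field_simp; ring
    rw [this, one_smul]
  calc (c / (1 + c)) • y + ((c / (1 + c)) • z - (c / (1 + c)) • y + (1 / (1 + c)) • z)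
      = (c / (1 + c)) • z + (1 / (1 + c)) • z := by abel
    _ = z := h4

lemma face_mem_of_mem_affineSpan {E : Type*} [NormedAddCommGroup E] [NormedSpace ℝ E]
    [FiniteDimensional ℝ E] {S F : Set E} (hF : IsFaceOf S F) (hFne : F.Nonempty)
    {y : E} (hyS : y ∈ S) (hy : y ∈ affineSpan ℝ F) : y ∈ F := by
  obtain ⟨z, hz⟩ := hFne.intrinsicInterior hF.2.1
  obtain ⟨z', hz'int, rfl⟩ := hz
  obtain ⟨δ, hδ, hball⟩ := Metric.mem_nhds_iff.1 (mem_interior_iff_mem_nhds.1 hz'int)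
  have hzF : (z' : E) ∈ F := Set.mem_preimage.mp (interior_subset hz'int)
  have hc : (0:ℝ) < δ / (2 * (‖(z' : E) - y‖ + 1)) := by positivity
  obtain ⟨c, hcpos, hcsmall⟩ : ∃ c : ℝ, 0 < c ∧ c * ‖(z' : E) - y‖ < δ :=
    ⟨δ / (2 * (‖(z' : E) - y‖ + 1)), hc, by
      rw [div_mul_eq_mul_div, div_lt_iff₀ (by positivity)]
      have hn : (0:ℝ) ≤ ‖(z' : E) - y‖ := norm_nonneg _
      nlinarith⟩
  have hwspan : c • ((z' : E) - y) + (z' : E) ∈ affineSpan ℝ F := by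
    have := AffineSubspace.smul_vsub_vadd_mem (affineSpan ℝ F) c z'.2 hy z'.2
    simpa [vsub_eq_sub, vadd_eq_add] using this
  have hwF : c • ((z' : E) - y) + (z' : E) ∈ F := by
    have hdist : dist (⟨_, hwspan⟩ : affineSpan ℝ F) z' < δ := by
      rw [Subtype.dist_eq]
      show dist (c • ((z' : E) - y) + (z' : E)) (z' : E) < δ
      rw [dist_eq_norm, add_sub_cancel_right, norm_smul, Real.norm_eq_abs,
        abs_of_nonneg hcpos.le]
      exact hcsmall
    exact hball (Metric.mem_ball.2 hdist)
  have ha : (0:ℝ) < c / (1 + c) := by positivity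
  have ha1 : c / (1 + c) < 1 := by
    rw [div_lt_one (by positivity)]; linarith
  exact (hF.2.2 hyS (hF.1 hwF) ha ha1 ((comb_eq y (z' : E) hcpos).symm ▸ hzF)).1

lemma setDim_lt_of_face {E : Type*} [NormedAddCommGroup E] [NormedSpace ℝ E]
    [FiniteDimensional ℝ E] {S F : Set E} (hF : IsFaceOf S F) (hFne : F.Nonempty)
    (hne : F ≠ S) : setDim F < setDim S := by
  have hsub := hF.1
  have hle : vectorSpan ℝ F ≤ vectorSpan ℝ S := vectorSpan_mono ℝ hsub
  have hdle : setDim F ≤ setDim S := Submodule.finrank_mono hle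
  rcases lt_or_eq_of_le hdle with h | h
  · exact h
  · exfalso
    have heq : vectorSpan ℝ F = vectorSpan ℝ S :=
      Submodule.eq_of_le_of_finrank_le hle h.ge
    obtain ⟨x0, hx0⟩ := hFne
    have hspan : affineSpan ℝ F = affineSpan ℝ S :=
      AffineSubspace.ext_of_direction_eq
        (by rw [direction_affineSpan, direction_affineSpan, heq])
        ⟨x0, subset_affineSpan ℝ _ hx0, subset_affineSpan ℝ _ (hsub hx0)⟩
    have hSF : S ⊆ F := fun y hy =>
      face_mem_of_mem_affineSpan hF ⟨x0, hx0⟩ hy (hspan ▸ subset_affineSpan ℝ S hy)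
    exact hne (le_antisymm hsub hSF)

lemma K15_memcomb {n : ℕ} {p q : EuclideanSpace ℝ (Fin n) × ℝ} (hp : p ∈ K15 n)
    (hq : q ∈ K15 n) {a b : ℝ} (ha : 0 ≤ a) (hb : 0 ≤ b) :
    a • p + b • q ∈ K15 n := by
  constructor
  · show ‖a • p.1 + b • q.1‖ ≤ a * p.2 + b * q.2
    calc ‖a • p.1 + b • q.1‖ ≤ ‖a • p.1‖ + ‖b • q.1‖ := norm_add_le _ _
      _ = a * ‖p.1‖ + b * ‖q.1‖ := by
          rw [norm_smul, norm_smul, Real.norm_eq_abs, Real.norm_eq_abs,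
            abs_of_nonneg ha, abs_of_nonneg hb]
      _ ≤ a * p.2 + b * q.2 := by
          have := hp.1; have := hq.1
          gcongr
  · intro i hi
    show 0 ≤ a * p.1 i + b * q.1 i
    have := hp.2 i hi; have := hq.2 i hi
    positivity

/-- faces cut out by vanishing of the coordinates `≥ k+1` -/
def gface15 (n k : ℕ) : Set (EuclideanSpace ℝ (Fin n) × ℝ) :=
  {p ∈ K15 n | ∀ i : Fin n, k + 1 ≤ (i : ℕ) → p.1 i = 0}

lemma gface15_isFaceOf (n k : ℕ) : IsFaceOf (K15 n) (gface15 n k) := by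
  refine ⟨fun p hp => hp.1, ?_, ?_⟩
  · rintro p ⟨hp, hp0⟩ q ⟨hq, hq0⟩ a b ha hb hab
    refine ⟨K15_memcomb hp hq ha hb, fun i hi => ?_⟩
    show a * p.1 i + b * q.1 i = 0
    rw [hp0 i hi, hq0 i hi]; ring
  · rintro x hx y hy a ha ha1 ⟨hcomb, h0⟩
    have ha1' : (0:ℝ) < 1 - a := by linarith
    have key : ∀ i : Fin n, k + 1 ≤ (i : ℕ) → x.1 i = 0 ∧ y.1 i = 0 := by
      intro i hi
      have hiz : (i : ℕ) ≠ 0 := by omega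
      have hxi := hx.2 i hiz
      have hyi := hy.2 i hiz
      have hsum : a * x.1 i + (1 - a) * y.1 i = 0 := h0 i hi
      constructor
      · nlinarith
      · nlinarith
    exact ⟨⟨hx, fun i hi => (key i hi).1⟩, ⟨hy, fun i hi => (key i hi).2⟩⟩

lemma zero_isFaceOf_K15 (n : ℕ) : IsFaceOf (K15 n) {0} := by
  refine ⟨fun p hp => ?_, convex_singleton 0, ?_⟩
  · rw [Set.mem_singleton_iff] at hp
    subst hp
    exact ⟨by simp, fun i _ => le_refl 0⟩
  · rintro x hx y hy a ha ha1 hcomb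
    rw [Set.mem_singleton_iff] at hcomb
    have ha1' : (0:ℝ) < 1 - a := by linarith
    have hx1 := hx.1
    have hy1 := hy.1
    have hsnd : a * x.2 + (1 - a) * y.2 = 0 := congrArg Prod.snd hcomb
    have hxn : (0:ℝ) ≤ ‖x.1‖ := norm_nonneg _
    have hyn : (0:ℝ) ≤ ‖y.1‖ := norm_nonneg _
    have hx2 : x.2 = 0 := by nlinarith
    have hy2 : y.2 = 0 := by nlinarith
    have hx0 : x.1 = 0 := by
      have : ‖x.1‖ ≤ 0 := hx2 ▸ hx1
      simpa using le_antisymm this hxn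
    have hy0 : y.1 = 0 := by
      have : ‖y.1‖ ≤ 0 := hy2 ▸ hy1
      simpa using le_antisymm this hyn
    constructor
    · rw [Set.mem_singleton_iff]; exact Prod.ext hx0 hx2
    · rw [Set.mem_singleton_iff]; exact Prod.ext hy0 hy2

noncomputable def e015 (n : ℕ) [NeZero n] : EuclideanSpace ℝ (Fin n) :=
  EuclideanSpace.single ⟨0, Nat.pos_of_ne_zero (NeZero.ne n)⟩ 1

section AuxN
variable {n : ℕ} [NeZero n]

lemma fin0_lt : 0 < n := Nat.pos_of_ne_zero (NeZero.ne n)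

lemma e015_apply (i : Fin n) (hi : (i : ℕ) ≠ 0) : e015 n i = 0 := by
  rw [e015, EuclideanSpace.single_apply, if_neg]
  intro h
  exact hi (by rw [h])

lemma e015_at_zero : e015 n ⟨0, fin0_lt⟩ = 1 := by
  rw [e015, EuclideanSpace.single_apply, if_pos rfl]

lemma e015_ne_zero : e015 n ≠ 0 := by
  intro h
  have : e015 n ⟨0, fin0_lt⟩ = 0 := by rw [h]; rfl
  rw [e015_at_zero] at this
  exact one_ne_zero this

lemma e015_norm : ‖e015 n‖ = 1 := by
  rw [e015, EuclideanSpace.norm_single, norm_one]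

lemma boundary_mem_extreme_ray (y : EuclideanSpace ℝ (Fin n))
    (hy : ∀ i : Fin n, (i : ℕ) ≠ 0 → 0 ≤ y i) :
    ∃ R : Set (EuclideanSpace ℝ (Fin n) × ℝ), IsExtremeRay (K15 n) R ∧ (y, ‖y‖) ∈ R := by
  by_cases h : y = 0
  · refine ⟨ray15 (e015 n),
      ray15_isExtremeRay _ e015_ne_zero (fun i hi => (e015_apply i hi).ge), 0, le_refl 0, ?_⟩
    subst h
    simp
  · exact ⟨ray15 y, ray15_isExtremeRay y h hy, 1, zero_le_one, by rw [one_smul, one_mul]⟩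

lemma K15_decomp {z : EuclideanSpace ℝ (Fin n) × ℝ} (hz : z ∈ K15 n) :
    IsSumOfExtremeRayElems (K15 n) 2 z := by
  obtain ⟨x, t⟩ := z
  obtain ⟨hxt, hxc⟩ := hz
  simp only at hxt hxc
  have ht0 : 0 ≤ t := le_trans (norm_nonneg _) hxt
  set g : ℝ → ℝ := fun s => ‖x + s • e015 n‖ + ‖x - s • e015 n‖ with hg
  have hgc : ContinuousOn g (Set.Icc 0 t) := by
    apply Continuous.continuousOn
    fun_prop
  have hg0 : g 0 = 2 * ‖x‖ := by simp [hg]; ring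
  have hgt : 2 * t ≤ g t := by
    have : ‖(x + t • e015 n) - (x - t • e015 n)‖ ≤ g t := norm_sub_le _ _
    have h2 : (x + t • e015 n) - (x - t • e015 n) = (2 * t) • e015 n := by
      rw [two_mul, add_smul]; abel
    rw [h2, norm_smul, Real.norm_eq_abs, abs_of_nonneg (by linarith), e015_norm, mul_one] at this
    exact this
  have hmem : 2 * t ∈ Set.Icc (g 0) (g t) := by
    rw [hg0]
    exact ⟨by linarith, hgt⟩
  obtain ⟨s, hs, hgs⟩ := intermediate_value_Icc ht0 hgc hmem
  set y : EuclideanSpace ℝ (Fin n) := (1/2 : ℝ) • (x + s • e015 n) with hy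
  set w : EuclideanSpace ℝ (Fin n) := (1/2 : ℝ) • (x - s • e015 n) with hw
  have hyw : y + w = x := by
    rw [hy, hw, ← smul_add]
    have : (x + s • e015 n) + (x - s • e015 n) = (2:ℝ) • x := by
      rw [two_smul]; abel
    rw [this, smul_smul]
    norm_num
  have hns : ‖y‖ + ‖w‖ = t := by
    have h1 : ‖y‖ = (1/2) * ‖x + s • e015 n‖ := by
      rw [hy, norm_smul, Real.norm_eq_abs]; norm_num
    have h2 : ‖w‖ = (1/2) * ‖x - s • e015 n‖ := by
      rw [hw, norm_smul, Real.norm_eq_abs]; norm_num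
    have : g s = 2 * t := hgs
    rw [hg] at this
    simp only at this
    linarith
  have hyc : ∀ i : Fin n, (i : ℕ) ≠ 0 → 0 ≤ y i := by
    intro i hi
    have : y i = (1/2) * (x i + s * e015 n i) := rfl
    rw [this, e015_apply i hi]
    have := hxc i hi
    nlinarith
  have hwc : ∀ i : Fin n, (i : ℕ) ≠ 0 → 0 ≤ w i := by
    intro i hi
    have : w i = (1/2) * (x i - s * e015 n i) := rfl
    rw [this, e015_apply i hi]
    have := hxc i hi
    nlinarith
  obtain ⟨R1, hR1, hR1m⟩ := boundary_mem_extreme_ray y hyc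
  obtain ⟨R2, hR2, hR2m⟩ := boundary_mem_extreme_ray w hwc
  refine ⟨2, le_refl 2, ![(y, ‖y‖), (w, ‖w‖)], ?_, ?_⟩
  · intro i
    fin_cases i
    · exact ⟨R1, hR1, hR1m⟩
    · exact ⟨R2, hR2, hR2m⟩
  · rw [Fin.sum_univ_two]
    show (x, t) = ((y, ‖y‖) + (w, ‖w‖) : EuclideanSpace ℝ (Fin n) × ℝ)
    refine Prod.ext ?_ ?_
    · show x = y + w
      exact hyw.symm
    · show t = ‖y‖ + ‖w‖
      exact hns.symm
end AuxN

noncomputable def g15 (n : ℕ) [NeZero n] : ℕ → Set (EuclideanSpace ℝ (Fin n) × ℝ)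
  | 0 => {0}
  | 1 => ray15 (e015 n)
  | (k+2) => gface15 n k

section AuxG
variable {n : ℕ} [NeZero n]

lemma g15_zero_mem : ∀ k, (0 : EuclideanSpace ℝ (Fin n) × ℝ) ∈ g15 n k
  | 0 => rfl
  | 1 => ⟨0, le_refl 0, by rw [zero_smul, zero_mul]; rfl⟩
  | (k+2) => ⟨⟨by simp, fun i _ => le_refl 0⟩, fun i _ => rfl⟩

lemma g15_isFaceOf : ∀ k, IsFaceOf (K15 n) (g15 n k)
  | 0 => zero_isFaceOf_K15 n
  | 1 => (ray15_isExtremeRay _ e015_ne_zero (fun i hi => (e015_apply i hi).ge)).1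
  | (k+2) => gface15_isFaceOf n k

lemma g15_step_subset : ∀ a, g15 n a ⊆ g15 n (a + 1)
  | 0 => by
      intro p hp
      have hp' : p = 0 := hp
      subst hp'
      exact g15_zero_mem 1
  | 1 => by
      rintro p ⟨c, hc, rfl⟩
      refine ⟨ray15_subset _ (fun i hi => (e015_apply i hi).ge) ⟨c, hc, rfl⟩, fun i hi => ?_⟩
      show c * e015 n i = 0
      rw [e015_apply i (by omega), mul_zero]
  | (k+2) => by
      rintro p ⟨hp, h0⟩
      exact ⟨hp, fun i hi => h0 i (by omega)⟩

lemma g15_step_witness : ∀ a, a ≤ n → ∃ p, p ∈ g15 n (a + 1) ∧ p ∉ g15 n a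
  | 0, _ => by
      refine ⟨(e015 n, 1), ⟨1, zero_le_one, by rw [one_smul, one_mul, e015_norm]⟩, ?_⟩
      intro h
      have h' : ((e015 n, 1) : EuclideanSpace ℝ (Fin n) × ℝ) = 0 := h
      have : (1 : ℝ) = 0 := congrArg Prod.snd h'
      norm_num at this
  | 1, _ => by
      refine ⟨(-e015 n, 1), ⟨⟨?_, ?_⟩, ?_⟩, ?_⟩
      · show ‖-e015 n‖ ≤ 1
        rw [norm_neg, e015_norm]
      · intro i hi
        show 0 ≤ -e015 n i
        rw [e015_apply i hi, neg_zero]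
      · intro i hi
        show -e015 n i = 0
        rw [e015_apply i (by omega), neg_zero]
      · rintro ⟨c, hc, hcp⟩
        have h2 : (1:ℝ) = c * ‖e015 n‖ := congrArg Prod.snd hcp
        rw [e015_norm, mul_one] at h2
        have h1 : -e015 n = c • e015 n := congrArg Prod.fst hcp
        have h3 := congrArg (fun v : EuclideanSpace ℝ (Fin n) => v (⟨0, fin0_lt⟩ : Fin n)) h1
        rw [show (-e015 n) (⟨0, fin0_lt⟩ : Fin n) = -(e015 n ⟨0, fin0_lt⟩) from rfl,
          show (c • e015 n) (⟨0, fin0_lt⟩ : Fin n) = c * e015 n ⟨0, fin0_lt⟩ from rfl,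
          e015_at_zero, mul_one] at h3
        linarith
  | (k+2), ha => by
      have hkn : k + 1 < n := by omega
      refine ⟨(EuclideanSpace.single ⟨k+1, hkn⟩ 1, 1), ⟨⟨?_, ?_⟩, ?_⟩, ?_⟩
      · show ‖EuclideanSpace.single (⟨k+1, hkn⟩ : Fin n) (1:ℝ)‖ ≤ 1
        rw [EuclideanSpace.norm_single, norm_one]
      · intro j _
        show (0:ℝ) ≤ EuclideanSpace.single (⟨k+1, hkn⟩ : Fin n) 1 j
        rw [EuclideanSpace.single_apply]
        split <;> norm_num
      · intro j hj
        show EuclideanSpace.single (⟨k+1, hkn⟩ : Fin n) (1:ℝ) j = 0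
        rw [EuclideanSpace.single_apply, if_neg]
        intro h
        rw [h] at hj
        have : ((⟨k+1, hkn⟩ : Fin n) : ℕ) = k + 1 := rfl
        omega
      · rintro ⟨_, h0⟩
        have h1 := h0 ⟨k+1, hkn⟩ (le_refl _)
        have h2 : EuclideanSpace.single (⟨k+1, hkn⟩ : Fin n) (1:ℝ) ⟨k+1, hkn⟩ = 1 := by
          rw [EuclideanSpace.single_apply, if_pos rfl]
        rw [show ((EuclideanSpace.single (⟨k+1, hkn⟩ : Fin n) (1:ℝ), (1:ℝ)) :
            EuclideanSpace ℝ (Fin n) × ℝ).1 = EuclideanSpace.single (⟨k+1, hkn⟩ : Fin n) (1:ℝ)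
            from rfl, h2] at h1
        norm_num at h1

lemma g15_mono : ∀ a b, a ≤ b → g15 n a ⊆ g15 n b := by
  intro a b hab
  induction b with
  | zero => rw [Nat.le_zero.mp hab]
  | succ b ih =>
      rcases Nat.lt_or_ge a (b+1) with h | h
      · exact Set.Subset.trans (ih (by omega)) (g15_step_subset b)
      · rw [show a = b + 1 by omega]

lemma g15_ssub : ∀ a b, a < b → a ≤ n → g15 n a ⊂ g15 n b := by
  intro a b hab han
  rw [Set.ssubset_def]
  refine ⟨g15_mono a b hab.le, fun hba => ?_⟩
  obtain ⟨p, hp1, hp0⟩ := g15_step_witness a han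
  exact hp0 (hba (g15_mono (a+1) b (by omega) hp1))
end AuxG

/-- For `n ≥ 1`, let
`K = {(x, t) : t ≥ sqrt (x₁² + ⋯ + xₙ²), x₂ ≥ 0, …, xₙ ≥ 0} ⊆ ℝⁿ × ℝ`.
Every element of `K` is a sum of at most 2 elements of extreme rays of `K`, while the
longest chain of nonempty faces of `K` has length `n + 2`. -/
theorem caratheodory_stmt15 {n : ℕ} (hn : 1 ≤ n)
    (K : Set (EuclideanSpace ℝ (Fin n) × ℝ))
    (hK : K = {p | Real.sqrt (∑ i, p.1 i ^ 2) ≤ p.2 ∧ ∀ i : Fin n, (i : ℕ) ≠ 0 → 0 ≤ p.1 i}) :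
    (∀ z ∈ K, IsSumOfExtremeRayElems K 2 z) ∧ IsLongestFaceChainLength K (n + 2) := by
  haveI : NeZero n := ⟨by omega⟩
  have hK15 : K = K15 n := by
    rw [hK]
    ext p
    have hsq : Real.sqrt (∑ i, p.1 i ^ 2) = ‖p.1‖ := by
      rw [EuclideanSpace.norm_eq]
      congr 1
      refine Finset.sum_congr rfl fun i _ => ?_
      rw [Real.norm_eq_abs, sq_abs]
    simp only [K15, Set.mem_setOf_eq, hsq]
  subst hK15
  have hfr : Module.finrank ℝ (EuclideanSpace ℝ (Fin n) × ℝ) = n + 1 := by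
    rw [Module.finrank_prod, finrank_euclideanSpace_fin, Module.finrank_self]
  constructor
  · exact fun z hz => K15_decomp hz
  constructor
  · -- the chain of length n + 2
    refine ⟨fun j => g15 n (n + 1 - (j : ℕ)), ?_, ?_⟩
    · intro i j hij
      have hi2 : (i : ℕ) < n + 2 := i.isLt
      have hj2 : (j : ℕ) < n + 2 := j.isLt
      have hij' : (i : ℕ) < (j : ℕ) := hij
      exact g15_ssub _ _ (by omega) (by omega)
    · intro j
      exact ⟨g15_isFaceOf _, 0, g15_zero_mem _⟩
  · -- upper bound
    rintro m ⟨c, hc, hfc⟩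
    have hdim : ∀ j, setDim (c j) ≤ n + 1 := by
      intro j
      have := Submodule.finrank_le (vectorSpan ℝ (c j))
      rw [hfr] at this
      exact this
    have hstrict : ∀ i j : Fin m, i < j → setDim (c j) < setDim (c i) := by
      intro i j hij
      have hlt : c j < c i := hc hij
      have hsub : c j ⊆ c i := hlt.le
      exact setDim_lt_of_face (isFaceOf_trans (hfc j).1 hsub (hfc i).1.1) (hfc j).2 hlt.ne
    have hinj : Function.Injective (fun j : Fin m =>
        (⟨setDim (c j), by have := hdim j; omega⟩ : Fin (n + 2))) := by
      intro a b hab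
      have hval : setDim (c a) = setDim (c b) := congrArg Fin.val hab
      by_contra h
      rcases Ne.lt_or_gt h with hl | hl
      · exact absurd hval (hstrict a b hl).ne'
      · exact absurd hval (hstrict b a hl).ne
    have := Fintype.card_le_of_injective _ hinj
    simpa using this
end

section
/- Let K ⊆ ℝⁿ be a closed convex cone and x ∈ K. Then x does not belong to the relative interior of K if and only if there exists s ∈ K* with ⟨s, x⟩ = 0 and s ∉ K^⊥. -/
/-!
If `x` lies in the relative interior of `K` and `⟪s, ·⟫` is nonnegative on `K` and vanishes at
`x`, then moving from `x` slightly away from any `y ∈ K` stays in `K`, which forces `⟪s, y⟫ = 0`.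

Conversely, let `D` be the direction of the affine span of a convex set `K ∋ x`. The convex set
`K + Dᗮ` has full affine span, hence nonempty interior, and it meets the affine span of `K` only
in `K`; so if `x` is not in the relative interior of `K`, it is not in the interior of `K + Dᗮ`,
and Hahn–Banach gives a functional `f` with `f ≤ f x` on `K + Dᗮ` and `f < f x` on its interior.
It vanishes on `Dᗮ`, so it is not constant on `K`. For a cone, `f ≤ f x` forces `f ≤ 0 = f x`
on `K`, and `s := -f` is the required element of `K*`.
-/

open scoped InnerProductSpace
open Set Pointwise Filter Topology

lemma nonpos_of_forall_nonneg_mul_le {a b : ℝ} (h : ∀ c : ℝ, 0 ≤ c → c * a ≤ b) : a ≤ 0 := by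
  by_contra! ha
  have := h ((|b| + 1) / a) (by positivity)
  rw [div_mul_cancel₀ _ ha.ne'] at this
  linarith [le_abs_self b]

section TopologicalVectorSpace

variable {V : Type*} [AddCommGroup V] [Module ℝ V] [TopologicalSpace V]
  [IsTopologicalAddGroup V] [ContinuousSMul ℝ V] {s : Set V} {x y : V}

lemma eventually_lineMap_mem_of_mem_intrinsicInterior (hx : x ∈ intrinsicInterior ℝ s)
    (hy : y ∈ s) : ∀ᶠ t in 𝓝 (0 : ℝ), AffineMap.lineMap x y t ∈ s := by
  obtain ⟨p, hp, rfl⟩ := hx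
  let g : ℝ → affineSpan ℝ s := fun t =>
    ⟨AffineMap.lineMap (p : V) y t, AffineMap.lineMap_mem t p.2 (subset_affineSpan ℝ s hy)⟩
  have hg : Continuous g := AffineMap.lineMap_continuous.subtype_mk _
  have hg0 : g 0 = p := Subtype.ext (AffineMap.lineMap_apply_zero _ _)
  exact hg.continuousAt.preimage_mem_nhds (by rwa [hg0, ← mem_interior_iff_mem_nhds])

lemma eq_zero_of_nonneg_of_mem_intrinsicInterior (f : V →ₗ[ℝ] ℝ) (hf : ∀ y ∈ s, 0 ≤ f y)
    (hx : x ∈ intrinsicInterior ℝ s) (hfx : f x = 0) : ∀ y ∈ s, f y = 0 := by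
  intro y hy
  have hline : ∀ t : ℝ, f (AffineMap.lineMap x y t) = t * f y := fun t => by
    simp [AffineMap.lineMap_apply_module', hfx]
  obtain ⟨t, ht, hneg⟩ := ((eventually_lineMap_mem_of_mem_intrinsicInterior hx hy).filter_mono
    nhdsWithin_le_nhds |>.and self_mem_nhdsWithin).exists (f := 𝓝[<] (0 : ℝ))
  have hnonneg := hf _ ht
  rw [hline] at hnonneg
  exact le_antisymm (nonpos_of_mul_nonneg_right hnonneg hneg) (hf y hy)

lemma exists_forall_le_and_forall_lt_of_notMem_interior {C : Set V} (hC : Convex ℝ C)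
    (hint : (interior C).Nonempty) (hx : x ∉ interior C) :
    ∃ f : StrongDual ℝ V, (∀ y ∈ C, f y ≤ f x) ∧ ∀ y ∈ interior C, f y < f x := by
  obtain ⟨f, hf⟩ := geometric_hahn_banach_open_point hC.interior isOpen_interior hx
  refine ⟨f, fun y hy => ?_, hf⟩
  have hsub : C ⊆ closure (interior C) := by
    rw [hC.closure_interior_eq_closure_of_nonempty_interior hint]
    exact subset_closure
  exact closure_minimal (fun z hz => (hf z hz).le) (isClosed_le f.continuous continuous_const)
    (hsub hy)

end TopologicalVectorSpace

section InnerProductSpace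

variable {E : Type*} [NormedAddCommGroup E] [InnerProductSpace ℝ E] {s : Set E} {x : E}

lemma affineSpan_add_orthogonal_direction_eq_top [FiniteDimensional ℝ E] (hx : x ∈ s) :
    affineSpan ℝ (s + ((affineSpan ℝ s).directionᗮ : Set E)) = ⊤ := by
  set D := (affineSpan ℝ s).direction
  have hxC : x ∈ s + (Dᗮ : Set E) := ⟨x, hx, 0, Dᗮ.zero_mem, add_zero x⟩
  rw [← AffineSubspace.direction_eq_top_iff_of_nonempty ⟨x, subset_affineSpan ℝ _ hxC⟩,
    eq_top_iff, ← D.sup_orthogonal_of_hasOrthogonalProjection, sup_le_iff]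
  constructor
  · exact AffineSubspace.direction_le (affineSpan_mono ℝ
      fun y hy => ⟨y, hy, 0, Dᗮ.zero_mem, add_zero y⟩)
  · intro w hw
    simpa using AffineSubspace.vsub_mem_direction
      (subset_affineSpan ℝ _ (Set.add_mem_add hx hw : x + w ∈ s + (Dᗮ : Set E)))
      (subset_affineSpan ℝ _ hxC)

lemma mem_intrinsicInterior_of_mem_interior_add_orthogonal_direction (hx : x ∈ s)
    (hxC : x ∈ interior (s + ((affineSpan ℝ s).directionᗮ : Set E))) :
    x ∈ intrinsicInterior ℝ s := by
  set D := (affineSpan ℝ s).direction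
  refine ⟨⟨x, subset_affineSpan ℝ s hx⟩, ?_, rfl⟩
  refine interior_maximal ?_ (isOpen_interior.preimage continuous_subtype_val) hxC
  rintro ⟨z, hz⟩ hzC
  obtain ⟨k, hk, w, hw, rfl⟩ := interior_subset hzC
  have hwD : w ∈ D := by
    simpa using AffineSubspace.vsub_mem_direction hz (subset_affineSpan ℝ s hk)
  simpa [Submodule.disjoint_def.1 D.orthogonal_disjoint w hwD hw] using hk

theorem Convex.exists_forall_le_and_exists_lt_of_notMem_intrinsicInterior
    [FiniteDimensional ℝ E] (hs : Convex ℝ s) (hx : x ∈ s) (hxs : x ∉ intrinsicInterior ℝ s) :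
    ∃ f : StrongDual ℝ E, (∀ y ∈ s, f y ≤ f x) ∧ ∃ y ∈ s, f y < f x := by
  set D := (affineSpan ℝ s).direction
  have hC : Convex ℝ (s + (Dᗮ : Set E)) := hs.add Dᗮ.convex
  have hint : (interior (s + (Dᗮ : Set E))).Nonempty := by
    rw [hC.interior_nonempty_iff_affineSpan_eq_top]
    exact affineSpan_add_orthogonal_direction_eq_top hx
  obtain ⟨f, hle, hlt⟩ := exists_forall_le_and_forall_lt_of_notMem_interior hC hint
    fun h => hxs (mem_intrinsicInterior_of_mem_interior_add_orthogonal_direction hx h)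
  have hfD : ∀ w ∈ Dᗮ, f w = 0 := fun w hw => by
    have h₁ := hle _ (Set.add_mem_add hx hw)
    have h₂ := hle _ (Set.add_mem_add hx (Dᗮ.neg_mem hw))
    simp only [map_add, map_neg] at h₁ h₂
    linarith
  refine ⟨f, fun y hy => hle y ⟨y, hy, 0, Dᗮ.zero_mem, add_zero y⟩, ?_⟩
  obtain ⟨z, hz⟩ := hint
  obtain ⟨k, hk, w, hw, rfl⟩ := interior_subset hz
  exact ⟨k, hk, by simpa [hfD w hw] using hlt _ hz⟩

end InnerProductSpace

theorem caratheodory_stmt16_general {n : ℕ} (K : Set (EuclideanSpace ℝ (Fin n)))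
    (hconv : Convex ℝ K)
    (hcone : ∀ (c : ℝ), 0 ≤ c → ∀ y ∈ K, c • y ∈ K)
    (x : EuclideanSpace ℝ (Fin n)) (hx : x ∈ K) :
    x ∉ intrinsicInterior ℝ K ↔
      ∃ s : EuclideanSpace ℝ (Fin n),
        (∀ y ∈ K, 0 ≤ ⟪s, y⟫_ℝ) ∧ ⟪s, x⟫_ℝ = 0 ∧ ¬(∀ y ∈ K, ⟪s, y⟫_ℝ = 0) := by
  constructor
  · intro hxK
    obtain ⟨f, hle, y, hy, hlt⟩ :=
      hconv.exists_forall_le_and_exists_lt_of_notMem_intrinsicInterior hx hxK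
    have hfK : ∀ y ∈ K, f y ≤ 0 := fun y hy =>
      nonpos_of_forall_nonneg_mul_le fun c hc => by simpa using hle _ (hcone c hc y hy)
    have hfx : f x = 0 := le_antisymm (hfK x hx) (by simpa using hle _ (hcone 0 le_rfl x hx))
    refine ⟨(InnerProductSpace.toDual ℝ _).symm (-f), fun y hy => ?_, ?_, fun h => ?_⟩
    · simpa [InnerProductSpace.toDual_symm_apply] using hfK y hy
    · simp [InnerProductSpace.toDual_symm_apply, hfx]
    · exact absurd (h y hy) (by simpa [InnerProductSpace.toDual_symm_apply] using
        (hlt.trans_eq hfx).ne)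
  · rintro ⟨s, hs, hsx, hsK⟩ hxK
    exact hsK (eq_zero_of_nonneg_of_mem_intrinsicInterior (innerₛₗ ℝ s) hs hxK hsx)

/-- For a closed convex cone `K` and `x ∈ K`, `x` is not in the relative
interior of `K` iff there exists `s ∈ K*` with `⟪s, x⟫ = 0` and `s ∉ K^⊥`. -/
theorem caratheodory_stmt16 {n : ℕ} (K : Set (EuclideanSpace ℝ (Fin n)))
    (hconv : Convex ℝ K)
    (hcone : ∀ (c : ℝ), 0 ≤ c → ∀ y ∈ K, c • y ∈ K)
    (hclosed : IsClosed K)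
    (x : EuclideanSpace ℝ (Fin n)) (hx : x ∈ K) :
    x ∉ intrinsicInterior ℝ K ↔
      ∃ s : EuclideanSpace ℝ (Fin n),
        (∀ y ∈ K, 0 ≤ ⟪s, y⟫_ℝ) ∧ ⟪s, x⟫_ℝ = 0 ∧ ¬(∀ y ∈ K, ⟪s, y⟫_ℝ = 0) :=
  caratheodory_stmt16_general K hconv hcone x hx
end
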